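/- Let X be a proper δ-hyperbolic geodesic space that is visual: for a base point o there is D > 0 such that for every x ∈ X there is η ∈ ∂X with d(o,x) ≤ (x,η)_o + D. Let T ⊆ X be a subset such that for every boundary point η ∈ ∂X there exists a (c₁,c₂)-quasi-geodesic ray in T from o converging to η. Then there is a constant Δ, depending only on δ, D, c₁, c₂, such that every point of X lies within distance Δ of T. -/
import Mathlib


open Metric Set Filter

/-- The Gromov product `(x,y)_o`. -/
noncomputable def gromov {X : Type*} [MetricSpace X] (o x y : X) : ℝ :=
  (dist x o + dist y o - dist x y) / 2

/-- `φ` parametrizes a geodesic from `x` to `y` by arclength. -/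
def IsGeodesicFrom {X : Type*} [MetricSpace X] (φ : ℝ → X) (x y : X) : Prop :=
  φ 0 = x ∧ φ (dist x y) = y ∧
    ∀ s ∈ Icc (0 : ℝ) (dist x y), ∀ t ∈ Icc (0 : ℝ) (dist x y), dist (φ s) (φ t) = |s - t|

/-- `G` is (the image of) a geodesic segment from `x` to `y`. -/
def IsGeodesicSeg {X : Type*} [MetricSpace X] (G : Set X) (x y : X) : Prop :=
  ∃ φ : ℝ → X, IsGeodesicFrom φ x y ∧ G = φ '' Icc 0 (dist x y)

/-- A geodesic metric space. -/
def GeodesicSpace (X : Type*) [MetricSpace X] : Prop :=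
  ∀ x y : X, ∃ G : Set X, IsGeodesicSeg G x y

/-- `δ`-hyperbolicity via thin triangles. -/
def DeltaHyp (X : Type*) [MetricSpace X] (δ : ℝ) : Prop :=
  ∀ x y z : X, ∀ Gxy Gyz Gxz : Set X,
    IsGeodesicSeg Gxy x y → IsGeodesicSeg Gyz y z → IsGeodesicSeg Gxz x z →
      ∀ p ∈ Gxz, infDist p (Gxy ∪ Gyz) ≤ δ

/-- `γ` is a geodesic ray from `o` (isometric on `[0,∞)`), representing a boundary
point. -/
def IsRayFrom {X : Type*} [MetricSpace X] (o : X) (γ : ℝ → X) : Prop :=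
  γ 0 = o ∧ ∀ s ≥ (0 : ℝ), ∀ t ≥ (0 : ℝ), dist (γ s) (γ t) = |s - t|

/-- The Gromov product `(x,η)_o` of a point with the boundary point represented by the
geodesic ray `γ`. -/
noncomputable def gromovRay {X : Type*} [MetricSpace X] (o x : X) (γ : ℝ → X) : ℝ :=
  liminf (fun t : ℝ => gromov o x (γ t)) atTop

lemma IsGeodesicSeg.left_mem {X : Type*} [MetricSpace X] {G : Set X} {a b : X}
    (h : IsGeodesicSeg G a b) : a ∈ G := by
  obtain ⟨ψ, ⟨h0, _, _⟩, rfl⟩ := h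
  exact ⟨0, ⟨le_refl _, dist_nonneg⟩, h0⟩

lemma IsGeodesicSeg.nonempty {X : Type*} [MetricSpace X] {G : Set X} {a b : X}
    (h : IsGeodesicSeg G a b) : G.Nonempty := ⟨a, h.left_mem⟩

lemma nat_sq_le_two_pow : ∀ l : ℕ, 4 ≤ l → l ^ 2 ≤ 2 ^ l := by
  intro l
  induction l with
  | zero => omega
  | succ k ih =>
    intro hk
    rcases Nat.lt_or_ge k 4 with h | h
    · have hk3 : k = 3 := by omega
      subst hk3; norm_num
    · have h1 := ih h
      have h2 : 2 * k + 1 ≤ k ^ 2 := by nlinarith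
      have h3 : 2 ^ (k + 1) = 2 ^ k + 2 ^ k := by ring
      have h4 : (k + 1) ^ 2 = k ^ 2 + (2 * k + 1) := by ring
      omega

/-- The contraction ("log") lemma: a point on a geodesic joining the endpoints of a
chain with `≤ 2^j` steps of size `≤ K` is within `j*(δ+1) + K` of the chain. -/
lemma contraction {X : Type} [MetricSpace X] {δ K : ℝ} (hδ : 0 ≤ δ) (hK : 0 ≤ K)
    (geo : GeodesicSpace X) (hyp : DeltaHyp X δ) :
    ∀ (j m : ℕ), m ≤ 2 ^ j → ∀ w : ℕ → X,
      (∀ i, i < m → dist (w i) (w (i + 1)) ≤ K) →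
      ∀ G : Set X, IsGeodesicSeg G (w 0) (w m) → ∀ p ∈ G,
      ∃ i, i ≤ m ∧ dist p (w i) ≤ (j : ℝ) * (δ + 1) + K := by
  intro j
  induction j with
  | zero =>
    intro m hm w hw G hG p hp
    obtain ⟨ψ, ⟨hψ0, hψd, hψ⟩, rfl⟩ := hG
    obtain ⟨s, hs, rfl⟩ := hp
    have hend : dist (w 0) (w m) ≤ K := by
      interval_cases m
      · simpa using hK
      · exact hw 0 (by omega)
    have h1 : dist (ψ s) (ψ 0) = |s - 0| := hψ s hs 0 ⟨le_refl _, dist_nonneg⟩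
    refine ⟨0, by omega, ?_⟩
    rw [hψ0] at h1
    rw [h1]
    rw [abs_of_nonneg (by linarith [hs.1])]
    simpa using le_trans (by linarith [hs.2]) hend
  | succ j ih =>
    intro m hm w hw G hG p hp
    have hhm : m / 2 ≤ m := Nat.div_le_self m 2
    have hp2 : (2:ℕ) ^ (j+1) = 2 ^ j + 2 ^ j := by ring
    have hh1 : m / 2 ≤ 2 ^ j := by omega
    have hh2 : m - m / 2 ≤ 2 ^ j := by omega
    obtain ⟨G₁, hG₁⟩ := geo (w 0) (w (m / 2))
    obtain ⟨G₂, hG₂⟩ := geo (w (m / 2)) (w m)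
    have hthin := hyp (w 0) (w (m / 2)) (w m) G₁ G₂ G hG₁ hG₂ hG p hp
    have hne : (G₁ ∪ G₂).Nonempty := hG₁.nonempty.mono subset_union_left
    obtain ⟨q, hq, hpq⟩ := (infDist_lt_iff hne).mp (lt_of_le_of_lt hthin (by linarith : δ < δ + 1))
    rcases hq with hq | hq
    · obtain ⟨i, hi, hqi⟩ := ih (m / 2) hh1 w (fun i hi => hw i (by omega)) G₁ hG₁ q hq
      refine ⟨i, by omega, ?_⟩
      have := dist_triangle p q (w i)
      push_cast
      nlinarith
    · have hG₂' : IsGeodesicSeg G₂ ((fun k => w (m / 2 + k)) 0)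
          ((fun k => w (m / 2 + k)) (m - m / 2)) := by
        simpa [Nat.add_sub_cancel' hhm] using hG₂
      obtain ⟨i, hi, hqi⟩ := ih (m - m / 2) hh2 (fun k => w (m / 2 + k))
        (fun i hi => by simpa [Nat.add_assoc] using hw (m / 2 + i) (by omega)) G₂ hG₂' q hq
      refine ⟨m / 2 + i, by omega, ?_⟩
      have := dist_triangle p q (w (m / 2 + i))
      push_cast
      nlinarith

/-- Subdivide a geodesic from `a` to `b` into a chain with steps `≤ K`. -/
lemma subdiv {X : Type} [MetricSpace X] (geo : GeodesicSpace X) {K : ℝ} (hK : 1 ≤ K)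
    (a b : X) :
    ∃ (m : ℕ) (c : ℕ → X), c 0 = a ∧ c m = b ∧ (∀ i, i < m → dist (c i) (c (i + 1)) ≤ K) ∧
      (∀ i, i ≤ m → dist a (c i) ≤ dist a b ∧ dist b (c i) ≤ dist a b) ∧
      (m : ℝ) ≤ dist a b + 1 := by
  obtain ⟨G, ψ, ⟨h0, hd, hdist⟩, -⟩ := geo a b
  have hK0 : (0:ℝ) < K := by linarith
  have hd0 : 0 ≤ dist a b := dist_nonneg
  set d := dist a b with hdd
  refine ⟨⌈d / K⌉₊, fun k => ψ (min (k * K) d), ?_, ?_, ?_, ?_, ?_⟩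
  · simp [hd0, h0]
  · have h1 : d ≤ (⌈d / K⌉₊ : ℝ) * K := by
      rw [← div_le_iff₀ hK0]
      exact Nat.le_ceil _
    show ψ (min ((⌈d / K⌉₊ : ℕ) * K) d) = b
    rw [min_eq_right h1, hd]
  · intro i hi
    have m1 : min ((i:ℝ) * K) d ∈ Icc 0 d :=
      ⟨le_min (by positivity) hd0, min_le_right _ _⟩
    have m2 : min (((i:ℕ)+1 : ℕ) * K) d ∈ Icc 0 d :=
      ⟨le_min (by positivity) hd0, min_le_right _ _⟩
    rw [hdist _ m1 _ m2]
    have := abs_min_sub_min_le_max ((i:ℝ) * K) d ((((i:ℕ)+1 : ℕ)) * K) d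
    simp only [sub_self, abs_zero] at this
    refine le_trans this ?_
    have : |(i:ℝ) * K - ((((i:ℕ)+1 : ℕ)) : ℝ) * K| = K := by
      push_cast; rw [show (i:ℝ) * K - ((i:ℝ)+1) * K = -K by ring, abs_neg,
        abs_of_pos hK0]
    rw [this]
    simp [hK0.le]
  · intro i hi
    have m1 : min ((i:ℝ) * K) d ∈ Icc 0 d :=
      ⟨le_min (by positivity) hd0, min_le_right _ _⟩
    constructor
    · show dist a (ψ (min ((i:ℝ) * K) d)) ≤ d
      have h1 : dist (ψ 0) (ψ (min ((i:ℝ) * K) d)) = |0 - min ((i:ℝ) * K) d| :=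
        hdist 0 ⟨le_refl _, hd0⟩ _ m1
      rw [h0] at h1
      rw [h1, abs_of_nonpos (by linarith [m1.1]), neg_sub, sub_zero]
      exact m1.2
    · show dist b (ψ (min ((i:ℝ) * K) d)) ≤ d
      have h1 : dist (ψ d) (ψ (min ((i:ℝ) * K) d)) = |d - min ((i:ℝ) * K) d| :=
        hdist d ⟨hd0, le_refl _⟩ _ m1
      rw [hd] at h1
      rw [h1, abs_of_nonneg (by linarith [m1.2])]
      linarith [m1.1]
  · calc (⌈d / K⌉₊ : ℝ) ≤ d / K + 1 := (Nat.ceil_lt_add_one (by positivity)).le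
      _ ≤ d + 1 := by
          have : d / K ≤ d := div_le_self hd0 hK
          linarith

/-- Concatenation of two chains. -/
lemma concat {X : Type} [MetricSpace X] (w₁ w₂ : ℕ → X) (m₁ m₂ : ℕ)
    (hj : w₁ m₁ = w₂ 0) :
    ∃ w : ℕ → X, w 0 = w₁ 0 ∧ w (m₁ + m₂) = w₂ m₂ ∧
      (∀ K : ℝ, (∀ i, i < m₁ → dist (w₁ i) (w₁ (i + 1)) ≤ K) →
        (∀ i, i < m₂ → dist (w₂ i) (w₂ (i + 1)) ≤ K) →
        ∀ i, i < m₁ + m₂ → dist (w i) (w (i + 1)) ≤ K) ∧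
      (∀ i, i ≤ m₁ + m₂ → (∃ j, j ≤ m₁ ∧ w i = w₁ j) ∨ (∃ j, j ≤ m₂ ∧ w i = w₂ j)) := by
  refine ⟨fun k => if k < m₁ then w₁ k else w₂ (k - m₁), ?_, ?_, ?_, ?_⟩
  · by_cases h : 0 < m₁
    · simp [h]
    · have hm : m₁ = 0 := by omega
      simp only [if_neg h]
      simpa [hm] using hj.symm
  · have h : ¬ (m₁ + m₂ < m₁) := by omega
    simp [h]
  · intro K h1 h2 i hi
    by_cases hA : i + 1 < m₁
    · simp only [if_pos (by omega : i < m₁), if_pos hA]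
      exact h1 i (by omega)
    · by_cases hB : i < m₁
      · have he : i + 1 = m₁ := by omega
        simp only [if_pos hB, if_neg hA]
        have h0' : i + 1 - m₁ = 0 := by omega
        rw [h0', ← hj, ← he]
        exact h1 i hB
      · simp only [if_neg hB, if_neg hA]
        have he : i + 1 - m₁ = (i - m₁) + 1 := by omega
        rw [he]
        exact h2 (i - m₁) (by omega)
  · intro i hi
    by_cases hB : i < m₁
    · exact Or.inl ⟨i, by omega, by simp [hB]⟩
    · exact Or.inr ⟨i - m₁, by omega, by simp [hB]⟩

noncomputable def D0 (δ c₁ c₂ : ℝ) : ℝ :=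
  ((δ + 1) * Real.sqrt (6 * c₁ + 2) +
    ((δ + 1) * (Real.sqrt (c₁ * c₂ + 2) + 5) + (c₁ + c₂))) ^ 2 + 1

set_option maxHeartbeats 1000000 in
/-- Key lemma: any point on a geodesic joining the endpoints of a discrete
quasi-geodesic chain is within `D0 δ c₁ c₂` of the chain. -/
lemma geo_close {δ c₁ c₂ : ℝ} (hδ : 0 ≤ δ) (hc₁ : 1 ≤ c₁) (hc₂ : 0 ≤ c₂)
    {X : Type} [MetricSpace X] (geo : GeodesicSpace X) (hyp : DeltaHyp X δ)
    (z : ℕ → X) (n : ℕ)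
    (hstep : ∀ i, i < n → dist (z i) (z (i + 1)) ≤ c₁ + c₂)
    (hlow : ∀ i, i ≤ n → ∀ j, j ≤ n → (i : ℝ) - (j : ℝ) ≤ c₁ * (dist (z i) (z j) + c₂))
    (G : Set X) (hG : IsGeodesicSeg G (z 0) (z n)) :
    ∀ p ∈ G, ∃ i, i ≤ n ∧ dist p (z i) ≤ D0 δ c₁ c₂ := by
  set K := c₁ + c₂ with hKdef
  have hK1 : 1 ≤ K := by rw [hKdef]; linarith only [hc₁, hc₂]
  have hK0 : (0:ℝ) ≤ K := by linarith only [hK1]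
  set S : Set X := z '' (Iic n) with hSdef
  have hSne : S.Nonempty := ⟨z 0, ⟨0, by simp, rfl⟩⟩
  have hSc : IsCompact S := ((finite_Iic n).image z).isCompact
  obtain ⟨g, ⟨hg1, hg2, hg3⟩, hGeq⟩ := hG
  set L := dist (z 0) (z n) with hLdef
  have hL0 : 0 ≤ L := dist_nonneg
  have hgc : ContinuousOn g (Icc 0 L) := by
    rw [Metric.continuousOn_iff]
    intro b hb ε hε
    refine ⟨ε, hε, fun a ha hab => ?_⟩
    rw [hg3 a ha b hb, ← Real.dist_eq]
    exact hab
  have hGc : IsCompact G := by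
    rw [hGeq]; exact isCompact_Icc.image_of_continuousOn hgc
  have hGne : G.Nonempty := ⟨z 0, by rw [hGeq]; exact ⟨0, ⟨le_refl _, hL0⟩, hg1⟩⟩
  obtain ⟨x₀, hx₀G, hx₀max⟩ :=
    hGc.exists_isMaxOn hGne ((continuous_infDist_pt S).continuousOn)
  have hmax : ∀ p ∈ G, infDist p S ≤ infDist x₀ S := fun p hp => hx₀max hp
  set Dm := infDist x₀ S with hDmdef
  have hDm0 : 0 ≤ Dm := infDist_nonneg
  obtain ⟨u₀, hu₀, hx₀⟩ : ∃ u₀ ∈ Icc (0:ℝ) L, g u₀ = x₀ := by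
    have := hx₀G; rw [hGeq] at this; exact this
  set uy := max (u₀ - 2 * Dm) 0 with huydef
  set uz := min (u₀ + 2 * Dm) L with huzdef
  have huy0 : 0 ≤ uy := le_max_right _ _
  have huyu₀ : uy ≤ u₀ := max_le (by linarith only [hDm0]) hu₀.1
  have huyL : uy ≤ L := le_trans huyu₀ hu₀.2
  have huzu₀ : u₀ ≤ uz := le_min (by linarith only [hDm0]) hu₀.2
  have huz0 : 0 ≤ uz := le_trans hu₀.1 huzu₀
  have huzL : uz ≤ L := min_le_right _ _
  set y := g uy with hydef
  set z' := g uz with hz'def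
  have hyG : y ∈ G := by rw [hGeq]; exact ⟨uy, ⟨huy0, huyL⟩, rfl⟩
  have hz'G : z' ∈ G := by rw [hGeq]; exact ⟨uz, ⟨huz0, huzL⟩, rfl⟩
  have hdyz : dist y z' = uz - uy := by
    rw [hg3 uy ⟨huy0, huyL⟩ uz ⟨huz0, huzL⟩,
      abs_of_nonpos (by linarith only [huyu₀, huzu₀]), neg_sub]
  have hdxy : dist x₀ y = u₀ - uy := by
    rw [← hx₀, hg3 u₀ hu₀ uy ⟨huy0, huyL⟩, abs_of_nonneg (by linarith only [huyu₀])]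
  have hdxz : dist x₀ z' = uz - u₀ := by
    rw [← hx₀, hg3 u₀ hu₀ uz ⟨huz0, huzL⟩,
      abs_of_nonpos (by linarith only [huzu₀]), neg_sub]
  obtain ⟨w₁, hw₁S, hw₁d⟩ := hSc.exists_infDist_eq_dist hSne y
  obtain ⟨i₁, hi₁n, rfl⟩ := hw₁S
  obtain ⟨w₂, hw₂S, hw₂d⟩ := hSc.exists_infDist_eq_dist hSne z'
  obtain ⟨i₂, hi₂n, rfl⟩ := hw₂S
  have hi₁n' : i₁ ≤ n := mem_Iic.mp hi₁n
  have hi₂n' : i₂ ≤ n := mem_Iic.mp hi₂n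
  have hIy : infDist y S ≤ Dm := hmax y hyG
  have hIz : infDist z' S ≤ Dm := hmax z' hz'G
  have hd1 : dist y (z i₁) ≤ Dm := by rw [← hw₁d]; exact hIy
  have hd2 : dist z' (z i₂) ≤ Dm := by rw [← hw₂d]; exact hIz
  have claimM : ∀ i, i ≤ n → Dm ≤ dist x₀ (z i) := fun i hi =>
    infDist_le_dist_of_mem ⟨i, mem_Iic.mpr hi, rfl⟩
  have claimL : ∀ v : X, dist y v ≤ dist y (z i₁) → Dm ≤ dist x₀ v := by
    intro v hv
    rcases le_or_gt 0 (u₀ - 2 * Dm) with h | h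
    · have heq : uy = u₀ - 2 * Dm := max_eq_left h
      have h2 : dist x₀ y = 2 * Dm := by rw [hdxy, heq]; ring
      have h3 := dist_triangle x₀ v y
      have h4 := dist_comm v y
      linarith only [hv, hd1, h2, h3, h4]
    · have heq : uy = 0 := max_eq_right h.le
      have hy0 : y = z 0 := by rw [hydef, heq, hg1]
      have h4 : infDist y S = 0 := by
        rw [hy0]; exact infDist_zero_of_mem ⟨0, by simp, rfl⟩
      have h5 : dist y (z i₁) = 0 := by rw [← hw₁d, h4]
      have h6 : v = y := by
        have h7 : dist y v = 0 :=
          le_antisymm (by linarith only [hv, h5]) dist_nonneg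
        exact (dist_eq_zero.mp h7).symm
      rw [h6, hy0]
      exact claimM 0 (Nat.zero_le n)
  have claimR : ∀ v : X, dist z' v ≤ dist (z i₂) z' → Dm ≤ dist x₀ v := by
    intro v hv
    rw [dist_comm (z i₂) z'] at hv
    rcases le_or_gt (u₀ + 2 * Dm) L with h | h
    · have heq : uz = u₀ + 2 * Dm := min_eq_left h
      have h2 : dist x₀ z' = 2 * Dm := by rw [hdxz, heq]; ring
      have h3 := dist_triangle x₀ v z'
      have h4 := dist_comm v z'
      linarith only [hv, hd2, h2, h3, h4]
    · have heq : uz = L := min_eq_right h.le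
      have hz0 : z' = z n := by rw [hz'def, heq, hLdef, hg2]
      have h4 : infDist z' S = 0 := by
        rw [hz0]; exact infDist_zero_of_mem ⟨n, by simp, rfl⟩
      have h5 : dist z' (z i₂) = 0 := by rw [← hw₂d, h4]
      have h6 : v = z' := by
        have h7 : dist z' v = 0 :=
          le_antisymm (by linarith only [hv, h5]) dist_nonneg
        exact (dist_eq_zero.mp h7).symm
      rw [h6, hz0]
      exact claimM n (le_refl n)
  -- build the comparison chain
  obtain ⟨m₁, cL, hcL0, hcL1, hcLstep, hcLprop, hcLm⟩ := subdiv geo hK1 y (z i₁)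
  obtain ⟨m₂, cR, hcR0, hcR1, hcRstep, hcRprop, hcRm⟩ := subdiv geo hK1 (z i₂) z'
  set mc := if i₁ ≤ i₂ then i₂ - i₁ else i₁ - i₂ with hmcdef
  set cM : ℕ → X := fun j => if i₁ ≤ i₂ then z (i₁ + j) else z (i₁ - j) with hcMdef
  have hcM0 : cM 0 = z i₁ := by by_cases h : i₁ ≤ i₂ <;> simp [hcMdef, h]
  have hcM1 : cM mc = z i₂ := by
    by_cases h : i₁ ≤ i₂
    · simp only [hcMdef, hmcdef, if_pos h]
      congr 1; omega
    · simp only [hcMdef, hmcdef, if_neg h]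
      congr 1; omega
  have hcMstep : ∀ j, j < mc → dist (cM j) (cM (j + 1)) ≤ K := by
    intro jj hjj
    by_cases h : i₁ ≤ i₂
    · rw [hmcdef, if_pos h] at hjj
      simp only [hcMdef, if_pos h]
      rw [show i₁ + (jj + 1) = (i₁ + jj) + 1 by omega]
      exact hstep _ (by omega)
    · rw [hmcdef, if_neg h] at hjj
      simp only [hcMdef, if_neg h]
      rw [dist_comm, show i₁ - jj = (i₁ - (jj + 1)) + 1 by omega]
      exact hstep _ (by omega)
  have hcMidx : ∀ j, j ≤ mc → ∃ i, i ≤ n ∧ cM j = z i := by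
    intro jj hjj
    by_cases h : i₁ ≤ i₂
    · rw [hmcdef, if_pos h] at hjj
      exact ⟨i₁ + jj, by omega, by simp [hcMdef, if_pos h]⟩
    · rw [hmcdef, if_neg h] at hjj
      exact ⟨i₁ - jj, by omega, by simp [hcMdef, if_neg h]⟩
  obtain ⟨w12, hw12a, hw12b, hw12step, hw12mem⟩ :=
    concat cL cM m₁ mc (by rw [hcL1, hcM0])
  obtain ⟨w, hwa, hwb, hwstep, hwmem⟩ :=
    concat w12 cR (m₁ + mc) m₂ (by rw [hw12b, hcM1, hcR0])
  set m := m₁ + mc + m₂ with hmdef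
  have hw0 : w 0 = y := by rw [hwa, hw12a, hcL0]
  have hwm : w m = z' := by rw [hmdef, hwb, hcR1]
  have hwstep' : ∀ i, i < m → dist (w i) (w (i + 1)) ≤ K :=
    hwstep K (hw12step K hcLstep hcMstep) hcRstep
  have hfar : ∀ i, i ≤ m → Dm ≤ dist x₀ (w i) := by
    intro i hi
    rcases hwmem i hi with ⟨j, hj, hji⟩ | ⟨j, hj, hji⟩
    · rcases hw12mem j hj with ⟨k, hk, hjk⟩ | ⟨k, hk, hjk⟩
      · rw [hji, hjk]; exact claimL _ (hcLprop k hk).1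
      · rw [hji, hjk]
        obtain ⟨i', hi', he⟩ := hcMidx k hk
        rw [he]; exact claimM i' hi'
    · rw [hji]; exact claimR _ (hcRprop j hj).2
  -- the sub-geodesic from y to z' through x₀
  have hG' : IsGeodesicSeg ((fun t => g (uy + t)) '' Icc 0 (dist y z')) y z' := by
    refine ⟨fun t => g (uy + t), ⟨?_, ?_, ?_⟩, rfl⟩
    · show g (uy + 0) = y
      rw [add_zero]
    · show g (uy + dist y z') = z'
      rw [hdyz, show uy + (uz - uy) = uz by ring]
    · intro s hs t ht
      rw [hdyz] at hs ht
      have h1 : uy + s ∈ Icc 0 L :=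
        ⟨by linarith only [hs.1, huy0], by linarith only [hs.2, huzL]⟩
      have h2 : uy + t ∈ Icc 0 L :=
        ⟨by linarith only [ht.1, huy0], by linarith only [ht.2, huzL]⟩
      show dist (g (uy + s)) (g (uy + t)) = |s - t|
      rw [hg3 _ h1 _ h2]
      congr 1; ring
  have hx₀G' : x₀ ∈ (fun t => g (uy + t)) '' Icc 0 (dist y z') := by
    refine ⟨u₀ - uy, ⟨by linarith only [huyu₀], by rw [hdyz]; linarith only [huzu₀]⟩, ?_⟩
    show g (uy + (u₀ - uy)) = x₀
    rw [show uy + (u₀ - uy) = u₀ by ring, hx₀]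
  have hG'' : IsGeodesicSeg ((fun t => g (uy + t)) '' Icc 0 (dist y z')) (w 0) (w m) := by
    rw [hw0, hwm]; exact hG'
  set jj := Nat.log 2 m + 1 with hjjdef
  have hmj : m ≤ 2 ^ jj := (Nat.lt_pow_succ_log_self (by norm_num) m).le
  obtain ⟨i, him, hidist⟩ :=
    contraction hδ hK0 geo hyp jj m hmj w hwstep' _ hG'' x₀ hx₀G'
  have hDm_le : Dm ≤ (jj : ℝ) * (δ + 1) + K := le_trans (hfar i him) hidist
  -- bound jj by sqrt m + 5
  have hjb : (jj : ℝ) ≤ Real.sqrt m + 5 := by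
    by_cases hm4 : Nat.log 2 m < 4
    · have h1 : (jj : ℝ) ≤ 5 := by
        have h2 : jj ≤ 5 := by omega
        exact_mod_cast h2
      linarith only [h1, Real.sqrt_nonneg (m : ℝ)]
    · push_neg at hm4
      have hm1 : m ≠ 0 := by
        intro h; rw [h, Nat.log_zero_right] at hm4; omega
      have h2 : (Nat.log 2 m) ^ 2 ≤ 2 ^ (Nat.log 2 m) := nat_sq_le_two_pow _ hm4
      have h3 : 2 ^ (Nat.log 2 m) ≤ m := Nat.pow_log_le_self 2 hm1
      have h4 : ((Nat.log 2 m : ℝ)) ^ 2 ≤ (m : ℝ) := by exact_mod_cast le_trans h2 h3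
      have h5 : (Nat.log 2 m : ℝ) ≤ Real.sqrt m := by
        rw [← Real.sqrt_sq (by positivity : (0:ℝ) ≤ ((Nat.log 2 m : ℕ) : ℝ))]
        exact Real.sqrt_le_sqrt h4
      have h6 : (jj : ℝ) = (Nat.log 2 m : ℝ) + 1 := by rw [hjjdef]; push_cast; ring
      linarith only [h5, h6]
  -- bound m linearly in Dm
  have hyz4 : dist y z' ≤ 4 * Dm := by
    rw [hdyz]
    linarith only [min_le_left (u₀ + 2 * Dm) L, le_max_left (u₀ - 2 * Dm) 0,
      huydef, huzdef]
  have hzz : dist (z i₁) (z i₂) ≤ 6 * Dm := by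
    have h1 := dist_triangle4 (z i₁) y z' (z i₂)
    have h2 := dist_comm y (z i₁)
    linarith only [h1, h2, hd1, hd2, hyz4]
  have hc₁0 : (0:ℝ) < c₁ := by linarith only [hc₁]
  have hmc_bound : (mc : ℝ) ≤ c₁ * (6 * Dm + c₂) := by
    have hmul := mul_le_mul_of_nonneg_left
      (show dist (z i₁) (z i₂) + c₂ ≤ 6 * Dm + c₂ by linarith only [hzz]) hc₁0.le
    by_cases h : i₁ ≤ i₂
    · have he : (mc : ℝ) = (i₂ : ℝ) - i₁ := by
        rw [hmcdef, if_pos h]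
        push_cast [Nat.cast_sub h]; ring
      have hl := hlow i₂ hi₂n' i₁ hi₁n'
      rw [dist_comm (z i₂) (z i₁)] at hl
      rw [he]
      linarith only [hl, hmul]
    · have he : (mc : ℝ) = (i₁ : ℝ) - i₂ := by
        rw [hmcdef, if_neg h]
        push_cast [Nat.cast_sub (by omega : i₂ ≤ i₁)]; ring
      have hl := hlow i₁ hi₁n' i₂ hi₂n'
      rw [he]
      linarith only [hl, hmul]
  have hm_bound : (m : ℝ) ≤ (6 * c₁ + 2) * Dm + (c₁ * c₂ + 2) := by
    have h1 : (m₁ : ℝ) ≤ Dm + 1 := le_trans hcLm (by linarith only [hd1])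
    have h2 : (m₂ : ℝ) ≤ Dm + 1 := by
      refine le_trans hcRm ?_
      have h2' := dist_comm (z i₂) z'
      linarith only [hd2, h2']
    have h3 : (m : ℝ) = (m₁ : ℝ) + mc + m₂ := by rw [hmdef]; push_cast; ring
    have h4 : c₁ * (6 * Dm + c₂) = 6 * c₁ * Dm + c₁ * c₂ := by ring
    have h5 : (6 * c₁ + 2) * Dm + (c₁ * c₂ + 2) = 6 * c₁ * Dm + 2 * Dm + c₁ * c₂ + 2 := by
      ring
    rw [h3, h5]
    linarith only [h1, h2, hmc_bound, h4]
  -- solve for Dm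
  have hfin : Dm ≤ D0 δ c₁ c₂ := by
    have hα0 : (0:ℝ) ≤ 6 * c₁ + 2 := by linarith only [hc₁]
    have hβ0 : (0:ℝ) ≤ c₁ * c₂ + 2 := by positivity
    set sα := Real.sqrt (6 * c₁ + 2) with hsα
    set sβ := Real.sqrt (c₁ * c₂ + 2) with hsβ
    set sD := Real.sqrt Dm with hsD
    have eα : sα * sα = 6 * c₁ + 2 := Real.mul_self_sqrt hα0
    have eβ : sβ * sβ = c₁ * c₂ + 2 := Real.mul_self_sqrt hβ0
    have eD : sD * sD = Dm := Real.mul_self_sqrt hDm0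
    have hsα0 : 0 ≤ sα := Real.sqrt_nonneg _
    have hsβ0 : 0 ≤ sβ := Real.sqrt_nonneg _
    have hsD0 : 0 ≤ sD := Real.sqrt_nonneg _
    have hsm : Real.sqrt m ≤ sα * sD + sβ := by
      have hx : (sα * sD + sβ) ^ 2 = (sα * sα) * (sD * sD) + 2 * (sα * sD * sβ) + sβ * sβ := by
        ring
      have h1 : (m : ℝ) ≤ (sα * sD + sβ) ^ 2 := by
        rw [hx, eα, eD, eβ]
        have h0 : 0 ≤ sα * sD * sβ := by positivity
        linarith only [hm_bound, h0]
      calc Real.sqrt m ≤ Real.sqrt ((sα * sD + sβ) ^ 2) := Real.sqrt_le_sqrt h1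
        _ = sα * sD + sβ := Real.sqrt_sq (by positivity)
    set c := (δ + 1) * sα with hcdef
    set c' := (δ + 1) * (sβ + 5) + K with hc'def
    have hc0 : 0 ≤ c := mul_nonneg (by linarith only [hδ]) hsα0
    have hc'0 : 0 ≤ c' := by
      have : (0:ℝ) ≤ (δ + 1) * (sβ + 5) :=
        mul_nonneg (by linarith only [hδ]) (by linarith only [hsβ0])
      rw [hc'def]
      linarith only [this, hK0]
    have hDc : Dm ≤ c * sD + c' := by
      have h7 : (jj : ℝ) ≤ sα * sD + sβ + 5 := by linarith only [hjb, hsm]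
      have h8 : (jj : ℝ) * (δ + 1) ≤ (sα * sD + sβ + 5) * (δ + 1) :=
        mul_le_mul_of_nonneg_right h7 (by linarith only [hδ])
      have h9 : (sα * sD + sβ + 5) * (δ + 1) = ((δ + 1) * sα) * sD + (δ + 1) * (sβ + 5) := by
        ring
      rw [hcdef, hc'def]
      linarith only [hDm_le, h8, h9]
    have hgoal : Dm ≤ (c + c') ^ 2 + 1 := by
      by_cases h1 : Dm ≤ 1
      · linarith only [h1, sq_nonneg (c + c')]
      · push_neg at h1
        have hs1 : 1 ≤ sD := by
          rw [hsD, show (1:ℝ) = Real.sqrt 1 by rw [Real.sqrt_one]]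
          exact Real.sqrt_le_sqrt (by linarith only [h1])
        have h3 : c' ≤ c' * sD := le_mul_of_one_le_right hc'0 hs1
        have h5 : (c + c') * sD = c * sD + c' * sD := by ring
        have h4 : sD * sD ≤ (c + c') * sD := by linarith only [eD, hDc, h3, h5]
        have hsDpos : 0 < sD := lt_of_lt_of_le one_pos hs1
        have h2 : sD ≤ c + c' := le_of_mul_le_mul_right h4 hsDpos
        have h6 : sD * sD ≤ (c + c') * (c + c') :=
          mul_le_mul h2 h2 hsD0 (by linarith only [hc0, hc'0])
        have h7 : (c + c') * (c + c') = (c + c') ^ 2 := by ring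
        linarith only [eD, h6, h7]
    have hD0eq : D0 δ c₁ c₂ = (c + c') ^ 2 + 1 := by
      rw [hcdef, hc'def, hsα, hsβ, hKdef, D0]
    rw [hD0eq]
    exact hgoal
  intro p hp
  obtain ⟨wp, hwpS, hwpd⟩ := hSc.exists_infDist_eq_dist hSne p
  obtain ⟨ip, hipn, rfl⟩ := hwpS
  exact ⟨ip, mem_Iic.mp hipn, by rw [← hwpd]; exact le_trans (hmax p hp) hfin⟩

set_option maxHeartbeats 1000000 in
/-- If `X` is a proper visual `δ`-hyperbolic geodesic space (every `x` satisfies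
`d(o,x) ≤ (x,η)_o + D` for some boundary point `η`), and `T ⊆ X` contains, for every
boundary point `η` (represented by a geodesic ray `γ` from `o`), a `(c₁,c₂)`-quasi-geodesic
ray from `o` converging to `η`, then there is `Δ` depending only on `δ, D, c₁, c₂` such
that every point of `X` lies within distance `Δ` of `T`. -/
theorem visual_tree_dense (δ D c₁ c₂ : ℝ) (hδ : 0 ≤ δ) (hD : 0 < D)
    (hc₁ : 1 ≤ c₁) (hc₂ : 0 ≤ c₂) :
    ∃ Δ : ℝ, ∀ (X : Type) [MetricSpace X], ProperSpace X → GeodesicSpace X →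
      DeltaHyp X δ → ∀ (o : X) (T : Set X),
      (∀ x : X, ∃ γ : ℝ → X, IsRayFrom o γ ∧ dist o x ≤ gromovRay o x γ + D) →
      (∀ γ : ℝ → X, IsRayFrom o γ → ∃ φ : ℝ → X,
        (∀ t ≥ (0 : ℝ), φ t ∈ T) ∧ φ 0 = o ∧
        (∀ s ≥ (0 : ℝ), ∀ t ≥ (0 : ℝ),
          c₁⁻¹ * |s - t| - c₂ ≤ dist (φ s) (φ t) ∧ dist (φ s) (φ t) ≤ c₁ * |s - t| + c₂) ∧
        Tendsto (fun p : ℝ × ℝ => gromov o (φ p.1) (γ p.2)) atTop atTop) →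
      ∀ x : X, infDist x T ≤ Δ := by
  refine ⟨3 * δ + 2 * D + D0 δ c₁ c₂ + 10, ?_⟩
  intro X _ _prop geo hyp o T hvis hT x
  set d := dist o x with hddef
  have hd0 : 0 ≤ d := dist_nonneg
  obtain ⟨γ, hray, hvisx⟩ := hvis x
  obtain ⟨hray1, hray2⟩ := hray
  obtain ⟨φ, hφT, hφ0, hφqg, htend⟩ := hT γ ⟨hray1, hray2⟩
  -- Gromov products of x with points far along γ are eventually > d - D - 1
  have hbdd : IsBoundedUnder (· ≥ ·) atTop (fun t : ℝ => gromov o x (γ t)) := by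
    refine isBoundedUnder_of ⟨0, fun t => ?_⟩
    have h1 := dist_triangle x o (γ t)
    have h2 := dist_comm (γ t) o
    simp only [gromov]
    linarith only [h1, h2]
  have hlim : d - D - 1 < liminf (fun t : ℝ => gromov o x (γ t)) atTop := by
    have h := hvisx
    simp only [gromovRay] at h
    linarith only [h, hD]
  obtain ⟨t₁, ht₁⟩ := eventually_atTop.mp
    (eventually_lt_of_lt_liminf hlim hbdd)
  -- Gromov products of far points of φ with far points of γ are large
  obtain ⟨a, ha⟩ := eventually_atTop.mp ((tendsto_atTop.mp htend) (d + δ + 1))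
  obtain ⟨n, hn⟩ := exists_nat_ge a.1
  set t := max t₁ (max a.2 d) with htdef
  have htt₁ : t₁ ≤ t := le_max_left _ _
  have hta2 : a.2 ≤ t := le_trans (le_max_left _ _) (le_max_right _ _)
  have htd : d ≤ t := le_trans (le_max_right _ _) (le_max_right _ _)
  have ht0 : 0 ≤ t := le_trans hd0 htd
  have hgr1 : d - D - 1 < gromov o x (γ t) := ht₁ t htt₁
  have hgrM : d + δ + 1 ≤ gromov o (φ (n : ℝ)) (γ t) :=
    ha ((n : ℝ), t) (Prod.le_def.mpr ⟨hn, hta2⟩)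
  -- basic distances along the ray
  have hdt : dist o (γ t) = t := by
    rw [← hray1, hray2 0 le_rfl t ht0, zero_sub, abs_neg, abs_of_nonneg ht0]
  have hdd' : dist o (γ d) = d := by
    rw [← hray1, hray2 0 le_rfl d hd0, zero_sub, abs_neg, abs_of_nonneg hd0]
  have hddt : dist (γ d) (γ t) = t - d := by
    rw [hray2 d hd0 t ht0, abs_of_nonpos (by linarith only [htd]), neg_sub]
  -- the ray up to time t is a geodesic from o to γ t
  have hGray : IsGeodesicSeg (γ '' Icc 0 (dist o (γ t))) o (γ t) :=
    ⟨γ, ⟨hray1, by rw [hdt], fun s hs u hu => hray2 s hs.1 u hu.1⟩, rfl⟩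
  have hγdmem : γ d ∈ γ '' Icc 0 (dist o (γ t)) :=
    ⟨d, by rw [hdt]; exact ⟨hd0, htd⟩, rfl⟩
  obtain ⟨Gox, hGox⟩ := geo o x
  obtain ⟨G2, hG2⟩ := geo x (γ t)
  -- Step 1: x is close to γ d
  have hstep1 : dist x (γ d) ≤ 2 * δ + 2 * D + 4 := by
    have hthin := hyp o x (γ t) Gox G2 _ hGox hG2 hGray (γ d) hγdmem
    have hne : (Gox ∪ G2).Nonempty := hGox.nonempty.mono subset_union_left
    obtain ⟨q, hq, hpq⟩ := (infDist_lt_iff hne).mp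
      (lt_of_le_of_lt hthin (by linarith only [] : δ < δ + 1))
    rcases hq with hq | hq
    · obtain ⟨ψ, ⟨hψ0, hψd, hψ⟩, hGeq⟩ := hGox
      rw [hGeq] at hq
      obtain ⟨u, hu, rfl⟩ := hq
      have e1 : dist (ψ u) x = d - u := by
        have h := hψ u hu (dist o x) ⟨hd0, le_rfl⟩
        rw [hψd] at h
        rw [h, abs_of_nonpos (by linarith only [hu.2]), neg_sub]
      have e2 : dist o (ψ u) = u := by
        rw [← hψ0, hψ 0 ⟨le_rfl, hd0⟩ u hu, zero_sub, abs_neg, abs_of_nonneg hu.1]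
      have e4 := dist_triangle o (ψ u) (γ d)
      have e5 := dist_triangle x (ψ u) (γ d)
      have e6 := dist_comm (ψ u) x
      have e7 := dist_comm (γ d) (ψ u)
      linarith only [e1, e2, e4, e5, e6, e7, hpq, hdd', hD]
    · obtain ⟨ψ, ⟨hψ0, hψd, hψ⟩, hGeq⟩ := hG2
      rw [hGeq] at hq
      obtain ⟨u, hu, rfl⟩ := hq
      have e1 : dist x (ψ u) = u := by
        rw [← hψ0, hψ 0 ⟨le_rfl, dist_nonneg⟩ u hu, zero_sub, abs_neg,
          abs_of_nonneg hu.1]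
      have e2 : dist (ψ u) (γ t) = dist x (γ t) - u := by
        have h := hψ u hu (dist x (γ t)) ⟨dist_nonneg, le_rfl⟩
        rw [hψd] at h
        rw [h, abs_of_nonpos (by linarith only [hu.2]), neg_sub]
      have e3 : dist x (γ t) < t - d + 2 * D + 2 := by
        have hg : (dist x o + dist (γ t) o - dist x (γ t)) / 2 > d - D - 1 := hgr1
        have c1 : dist x o = d := by rw [dist_comm]
        have c2 : dist (γ t) o = t := by rw [dist_comm]; exact hdt
        linarith only [hg, c1, c2]
      have e4 := dist_triangle (γ d) (ψ u) (γ t)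
      have e5 := dist_triangle x (ψ u) (γ d)
      have e6 := dist_comm (γ d) (ψ u)
      linarith only [e1, e2, e3, e4, e5, e6, hpq, hddt]
  -- Step 2: γ d is close to a point q₂ of the geodesic from o to φ n
  obtain ⟨Gop, hGop⟩ := geo o (φ (n : ℝ))
  obtain ⟨G3, hG3⟩ := geo (φ (n : ℝ)) (γ t)
  have hthin2 := hyp o (φ (n : ℝ)) (γ t) Gop G3 _ hGop hG3 hGray (γ d) hγdmem
  have hne2 : (Gop ∪ G3).Nonempty := hGop.nonempty.mono subset_union_left
  obtain ⟨q₂, hq₂, hpq₂⟩ := (infDist_lt_iff hne2).mp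
    (lt_of_le_of_lt hthin2 (by linarith only [] : δ < δ + 1))
  have hq₂Gop : q₂ ∈ Gop := by
    rcases hq₂ with h | h
    · exact h
    · exfalso
      obtain ⟨ψ, ⟨hψ0, hψd, hψ⟩, hGeq⟩ := hG3
      rw [hGeq] at h
      obtain ⟨v, hv, rfl⟩ := h
      have e1 : dist (φ (n : ℝ)) (ψ v) = v := by
        rw [← hψ0, hψ 0 ⟨le_rfl, dist_nonneg⟩ v hv, zero_sub, abs_neg,
          abs_of_nonneg hv.1]
      have e2 : dist (ψ v) (γ t) = dist (φ (n : ℝ)) (γ t) - v := by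
        have h := hψ v hv (dist (φ (n : ℝ)) (γ t)) ⟨dist_nonneg, le_rfl⟩
        rw [hψd] at h
        rw [h, abs_of_nonpos (by linarith only [hv.2]), neg_sub]
      have t1 := dist_triangle o (ψ v) (γ t)
      have t2 := dist_triangle o (ψ v) (φ (n : ℝ))
      have t3 := dist_triangle o (γ d) (ψ v)
      have e6 := dist_comm (ψ v) (φ (n : ℝ))
      have hg : (dist (φ (n : ℝ)) o + dist (γ t) o - dist (φ (n : ℝ)) (γ t)) / 2
          ≥ d + δ + 1 := hgrM
      have c1 := dist_comm (φ (n : ℝ)) o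
      have c2 : dist (γ t) o = t := by rw [dist_comm]; exact hdt
      linarith only [e1, e2, t1, t2, t3, e6, hg, c1, c2, hdt, hdd', hpq₂]
  -- Step 3: apply the chain lemma on the geodesic from o to φ n
  set z : ℕ → X := fun i => φ (i : ℝ) with hzdef
  have hz0 : z 0 = o := by
    show φ ((0 : ℕ) : ℝ) = o
    rw [Nat.cast_zero, hφ0]
  have hzstep : ∀ i, i < n → dist (z i) (z (i + 1)) ≤ c₁ + c₂ := by
    intro i _
    have h := (hφqg (i : ℝ) (Nat.cast_nonneg i) (((i + 1 : ℕ)) : ℝ)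
      (Nat.cast_nonneg _)).2
    have e : |(i : ℝ) - ((i + 1 : ℕ) : ℝ)| = 1 := by
      push_cast
      rw [show (i : ℝ) - ((i : ℝ) + 1) = -1 by ring, abs_neg, abs_one]
    rw [e, mul_one] at h
    exact h
  have hzlow : ∀ i, i ≤ n → ∀ j, j ≤ n →
      (i : ℝ) - (j : ℝ) ≤ c₁ * (dist (z i) (z j) + c₂) := by
    intro i _ j _
    have h := (hφqg (i : ℝ) (Nat.cast_nonneg i) (j : ℝ) (Nat.cast_nonneg j)).1
    have hc₁0 : (0:ℝ) < c₁ := by linarith only [hc₁]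
    have h3 : c₁⁻¹ * |(i : ℝ) - j| ≤ dist (z i) (z j) + c₂ := by
      linarith only [h]
    have h2 : |(i : ℝ) - j| ≤ c₁ * (dist (z i) (z j) + c₂) := by
      have h4 : |(i : ℝ) - j| = c₁ * (c₁⁻¹ * |(i : ℝ) - j|) := by
        field_simp
      rw [h4]
      exact mul_le_mul_of_nonneg_left h3 hc₁0.le
    exact le_trans (le_abs_self _) h2
  have hGop' : IsGeodesicSeg Gop (z 0) (z n) := by rw [hz0]; exact hGop
  obtain ⟨i, hin, hqz⟩ := geo_close hδ hc₁ hc₂ geo hyp z n hzstep hzlow Gop hGop' q₂ hq₂Gop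
  have hmem : z i ∈ T := hφT (i : ℝ) (Nat.cast_nonneg i)
  have tri := dist_triangle4 x (γ d) q₂ (z i)
  calc infDist x T ≤ dist x (z i) := infDist_le_dist_of_mem hmem
    _ ≤ 3 * δ + 2 * D + D0 δ c₁ c₂ + 10 := by
        linarith only [tri, hstep1, hpq₂, hqz]
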